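/- arXiv:2603.01306 — 3 statements merged into one kernel-verified Lean document; each statement's English description precedes it below -/
import Mathlib

section
/- Given nonnegative reals b₁ ≥ b₂ ≥ … ≥ b_p and an integer k with 1 ≤ k ≤ p, the problem min { Σ_{j=1}^k ω_j² : ω₁ ≥ … ≥ ω_k ≥ 0, Σ_{j=1}^k ω_j = Σ_{j=1}^p b_j, Σ_{j=1}^ℓ ω_j ≥ Σ_{j=1}^ℓ b_j for all ℓ < k } has optimal value Σ_{j=1}^κ b_j² + (Σ_{j=κ+1}^p b_j)²/(k−κ), where κ is the unique integer in {0,…,k−1} such that b_κ > (1/(k−κ)) Σ_{j=κ+1}^p b_j ≥ b_{κ+1} (with b_0 := +∞). -/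
private lemma abel_sum (a d : ℕ → ℝ) (n : ℕ) :
    ∑ j ∈ Finset.range n, a j * d j
      = a n * (∑ j ∈ Finset.range n, d j)
        + ∑ ℓ ∈ Finset.range n, (a ℓ - a (ℓ + 1)) * (∑ j ∈ Finset.range (ℓ + 1), d j) := by
  induction n with
  | zero => simp
  | succ n ih =>
    rw [Finset.sum_range_succ, ih, Finset.sum_range_succ
      (fun ℓ => (a ℓ - a (ℓ + 1)) * (∑ j ∈ Finset.range (ℓ + 1), d j)),
      Finset.sum_range_succ d n]
    ring

/-- Water-filling characterization: for nonincreasing nonnegative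
`b₀ ≥ … ≥ b_{p−1}` (0-indexed) and `1 ≤ k ≤ p`, the minimum of `Σ_{j<k} ωⱼ²`
over nonincreasing nonnegative `ω` majorizing `b` (partial sums dominate,
total sums equal) is `Σ_{j<κ} bⱼ² + (Σ_{j=κ}^{p−1} bⱼ)²/(k−κ)`, where `κ` is
the splitting index. -/
theorem water_filling (p k : ℕ) (hk1 : 1 ≤ k) (hkp : k ≤ p)
    (b : ℕ → ℝ) (hmono : ∀ i j, i ≤ j → j < p → b j ≤ b i)
    (hnonneg : ∀ j, j < p → 0 ≤ b j)
    (κ : ℕ) (hκk : κ < k)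
    (hκ1 : κ = 0 ∨ (1 / ((k : ℝ) - κ)) * ∑ j ∈ Finset.Ico κ p, b j < b (κ - 1))
    (hκ2 : b κ ≤ (1 / ((k : ℝ) - κ)) * ∑ j ∈ Finset.Ico κ p, b j) :
    IsLeast
      {v : ℝ | ∃ ω : ℕ → ℝ,
        (∀ j, j < k → 0 ≤ ω j) ∧
        (∀ i j, i ≤ j → j < k → ω j ≤ ω i) ∧
        (∑ j ∈ Finset.range k, ω j = ∑ j ∈ Finset.range p, b j) ∧
        (∀ ℓ, ℓ < k → ∑ j ∈ Finset.range ℓ, b j ≤ ∑ j ∈ Finset.range ℓ, ω j) ∧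
        v = ∑ j ∈ Finset.range k, (ω j) ^ 2}
      (∑ j ∈ Finset.range κ, (b j) ^ 2
        + (∑ j ∈ Finset.Ico κ p, b j) ^ 2 / ((k : ℝ) - κ)) := by
  have hκp : κ < p := lt_of_lt_of_le hκk hkp
  set S := ∑ j ∈ Finset.Ico κ p, b j with hSdef
  have hkκR : (0:ℝ) < (k:ℝ) - κ := by
    have : (κ:ℝ) < (k:ℝ) := by exact_mod_cast hκk
    linarith
  set c : ℝ := S / ((k:ℝ) - κ) with hcdef
  have hc_eq : (1 / ((k : ℝ) - κ)) * S = c := by rw [hcdef]; ring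
  have hbκc : b κ ≤ c := hc_eq ▸ hκ2
  have hcnn : 0 ≤ c := le_trans (hnonneg κ hκp) hbκc
  set a : ℕ → ℝ := fun j => if j < κ then b j else c with hadef
  have ha_lt : ∀ j, j < κ → a j = b j := fun j hj => if_pos hj
  have ha_ge : ∀ j, κ ≤ j → a j = c := fun j hj => if_neg (not_lt.mpr hj)
  have hcb : ∀ i, i < κ → c ≤ b i := by
    intro i hi
    rcases hκ1 with h0 | h
    · omega
    · have h1 : c < b (κ - 1) := hc_eq ▸ h
      have h2 : b (κ - 1) ≤ b i := hmono i (κ - 1) (by omega) (by omega)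
      linarith
  have hamono : ∀ i j, i ≤ j → a j ≤ a i := by
    intro i j hij
    by_cases hj : j < κ
    · rw [ha_lt j hj, ha_lt i (lt_of_le_of_lt hij hj)]
      exact hmono i j hij (by omega)
    · rw [ha_ge j (not_lt.mp hj)]
      by_cases hi : i < κ
      · rw [ha_lt i hi]; exact hcb i hi
      · rw [ha_ge i (not_lt.mp hi)]
  have hsum_lt : ∀ ℓ, ℓ ≤ κ → ∑ j ∈ Finset.range ℓ, a j = ∑ j ∈ Finset.range ℓ, b j := by
    intro ℓ hℓ
    refine Finset.sum_congr rfl fun j hj => ?_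
    have := Finset.mem_range.mp hj
    exact ha_lt j (by omega)
  have hsum_ge : ∀ ℓ, κ ≤ ℓ → ∑ j ∈ Finset.range ℓ, a j
      = ∑ j ∈ Finset.range κ, b j + ((ℓ - κ : ℕ) : ℝ) * c := by
    intro ℓ hℓ
    rw [Finset.range_eq_Ico, ← Finset.sum_Ico_consecutive _ (Nat.zero_le κ) hℓ,
      ← Finset.range_eq_Ico, hsum_lt κ le_rfl]
    congr 1
    rw [Finset.sum_congr rfl (fun j hj => ha_ge j (Finset.mem_Ico.mp hj).1),
      Finset.sum_const, Nat.card_Ico, nsmul_eq_mul]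
  have hbp_split : ∑ j ∈ Finset.range p, b j = ∑ j ∈ Finset.range κ, b j + S := by
    rw [hSdef, Finset.range_eq_Ico, ← Finset.sum_Ico_consecutive _ (Nat.zero_le κ) hκp.le,
      ← Finset.range_eq_Ico]
  have hkc : ((k - κ : ℕ) : ℝ) * c = S := by
    rw [Nat.cast_sub hκk.le, hcdef]
    field_simp
  have hsum_total : ∑ j ∈ Finset.range k, a j = ∑ j ∈ Finset.range p, b j := by
    rw [hsum_ge k hκk.le, hkc, hbp_split]
  have hdom : ∀ ℓ, ℓ < k → ∑ j ∈ Finset.range ℓ, b j ≤ ∑ j ∈ Finset.range ℓ, a j := by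
    intro ℓ hℓ
    by_cases hcase : ℓ ≤ κ
    · rw [hsum_lt ℓ hcase]
    · push_neg at hcase
      rw [hsum_ge ℓ hcase.le]
      have hsplit : ∑ j ∈ Finset.range ℓ, b j
          = ∑ j ∈ Finset.range κ, b j + ∑ j ∈ Finset.Ico κ ℓ, b j := by
        rw [Finset.range_eq_Ico, ← Finset.sum_Ico_consecutive _ (Nat.zero_le κ) hcase.le,
          ← Finset.range_eq_Ico]
      rw [hsplit]
      have hbound : ∑ j ∈ Finset.Ico κ ℓ, b j ≤ ((ℓ - κ : ℕ) : ℝ) * c := by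
        calc ∑ j ∈ Finset.Ico κ ℓ, b j ≤ ∑ _j ∈ Finset.Ico κ ℓ, c := by
              refine Finset.sum_le_sum fun j hj => ?_
              have hj' := Finset.mem_Ico.mp hj
              exact le_trans (hmono κ j hj'.1 (by omega)) hbκc
          _ = ((ℓ - κ : ℕ) : ℝ) * c := by
              rw [Finset.sum_const, Nat.card_Ico, nsmul_eq_mul]
      linarith
  have hval : ∑ j ∈ Finset.range k, (a j) ^ 2
      = ∑ j ∈ Finset.range κ, (b j) ^ 2 + S ^ 2 / ((k:ℝ) - κ) := by
    rw [Finset.range_eq_Ico, ← Finset.sum_Ico_consecutive _ (Nat.zero_le κ) hκk.le,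
      ← Finset.range_eq_Ico]
    congr 1
    · exact Finset.sum_congr rfl fun j hj => by rw [ha_lt j (Finset.mem_range.mp hj)]
    · rw [Finset.sum_congr rfl (fun j hj => by rw [ha_ge j (Finset.mem_Ico.mp hj).1]),
        Finset.sum_const, Nat.card_Ico, nsmul_eq_mul, Nat.cast_sub hκk.le, hcdef]
      field_simp
  constructor
  · refine ⟨a, ?_, fun i j hij _ => hamono i j hij, hsum_total, hdom, hval.symm⟩
    intro j hj
    by_cases hjκ : j < κ
    · rw [ha_lt j hjκ]; exact hnonneg j (by omega)
    · rw [ha_ge j (not_lt.mp hjκ)]; exact hcnn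
  · rintro v ⟨ω, hω0, hωm, hωtot, hωdom, rfl⟩
    have hDk : ∑ j ∈ Finset.range k, (ω j - a j) = 0 := by
      rw [Finset.sum_sub_distrib, hωtot, hsum_total]
      ring
    have hA : 0 ≤ ∑ j ∈ Finset.range k, a j * (ω j - a j) := by
      rw [abel_sum, hDk, mul_zero, zero_add]
      refine Finset.sum_nonneg fun ℓ hℓ => ?_
      have hℓk := Finset.mem_range.mp hℓ
      by_cases hcase : ℓ < κ
      · apply mul_nonneg
        · have := hamono ℓ (ℓ + 1) (Nat.le_succ ℓ); linarith
        · have h1 : ∑ j ∈ Finset.range (ℓ + 1), a j = ∑ j ∈ Finset.range (ℓ + 1), b j :=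
            hsum_lt _ (by omega)
          have h2 := hωdom (ℓ + 1) (by omega)
          rw [Finset.sum_sub_distrib, h1]
          linarith
      · rw [ha_ge ℓ (by omega), ha_ge (ℓ + 1) (by omega), sub_self, zero_mul]
    have hpt : ∀ j ∈ Finset.range k,
        a j ^ 2 + 2 * (a j * (ω j - a j)) ≤ (ω j) ^ 2 := by
      intro j _
      nlinarith [sq_nonneg (ω j - a j)]
    have hsum := Finset.sum_le_sum hpt
    rw [Finset.sum_add_distrib, ← Finset.mul_sum] at hsum
    rw [← hval]
    linarith
end

section
/- Let b₁ ≥ … ≥ b_p ≥ 0 and 1 ≤ k ≤ p with Σ_{j>1} b_j well-defined. Then, with the convention b_0 = +∞, there exists a unique integer κ ∈ {0, 1, …, k−1} satisfying b_κ > (1/(k−κ)) Σ_{j=κ+1}^p b_j ≥ b_{κ+1}. -/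
/-- Existence and uniqueness of the splitting index `κ` in the k-support norm
formula: for nonincreasing nonnegative `b` and `1 ≤ k ≤ p`, there is exactly
one `κ ∈ {0,…,k−1}` with `b_κ > T(κ) ≥ b_{κ+1}` (with the convention
`b_0 = +∞`, expressed by allowing the first inequality to be vacuous when
`κ = 0`), where `T(κ) = (1/(k−κ)) Σ_{j=κ+1}^p b_j`. Indices are 0-based, so
the paper's `b_κ` is `b (κ−1)` and `b_{κ+1}` is `b κ`. -/
theorem splitting_index_exists_unique (p k : ℕ) (hk1 : 1 ≤ k) (hkp : k ≤ p)
    (b : ℕ → ℝ) (hmono : ∀ i j, i ≤ j → j < p → b j ≤ b i)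
    (hnonneg : ∀ j, j < p → 0 ≤ b j) :
    ∃! κ : ℕ, κ < k ∧
      (κ = 0 ∨ (1 / ((k : ℝ) - κ)) * ∑ j ∈ Finset.Ico κ p, b j < b (κ - 1)) ∧
      b κ ≤ (1 / ((k : ℝ) - κ)) * ∑ j ∈ Finset.Ico κ p, b j := by
  classical
  set S : ℕ → ℝ := fun κ => ∑ j ∈ Finset.Ico κ p, b j with hS
  -- split off the bottom term
  have hsplit : ∀ κ, κ < p → S κ = b κ + S (κ + 1) := by
    intro κ hκ
    simp only [hS]
    rw [Finset.sum_eq_sum_Ico_succ_bot hκ]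
  have hSnonneg : ∀ κ, 0 ≤ S κ := by
    intro κ
    apply Finset.sum_nonneg
    intro j hj
    exact hnonneg j (Finset.mem_Ico.mp hj).2
  -- the key predicate
  set A : ℕ → Prop := fun κ => ((k : ℝ) - κ) * b κ ≤ S κ with hA
  -- A is upward monotone on [0, k)
  have hstep : ∀ κ, κ + 1 < k → A κ → A (κ + 1) := by
    intro κ hκ hAκ
    have hκp : κ + 1 < p := lt_of_lt_of_le hκ hkp
    have hb : b (κ + 1) ≤ b κ := hmono κ (κ + 1) (Nat.le_succ κ) hκp
    have hc : (0 : ℝ) ≤ (k : ℝ) - (κ + 1) := by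
      have : ((κ : ℝ) + 1) ≤ k := by exact_mod_cast hκ.le
      linarith
    have h1 : ((k : ℝ) - κ) * b κ ≤ b κ + S (κ + 1) := by
      rw [← hsplit κ (lt_of_le_of_lt (Nat.le_succ κ) hκp)]; exact hAκ
    have h2 : ((k : ℝ) - (κ + 1)) * b κ ≤ S (κ + 1) := by
      have : ((k : ℝ) - κ) * b κ = b κ + ((k : ℝ) - (κ + 1)) * b κ := by ring
      linarith [this ▸ h1]
    have h3 : ((k : ℝ) - (κ + 1)) * b (κ + 1) ≤ ((k : ℝ) - (κ + 1)) * b κ :=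
      mul_le_mul_of_nonneg_left hb hc
    simp only [hA]
    push_cast
    calc ((k : ℝ) - (κ + 1)) * b (κ + 1) ≤ ((k : ℝ) - (κ + 1)) * b κ := h3
      _ ≤ S (κ + 1) := h2
  have hmonoA : ∀ κ₁ κ₂, κ₁ ≤ κ₂ → κ₂ < k → A κ₁ → A κ₂ := by
    intro κ₁ κ₂ h12 h2k h1
    induction κ₂ with
    | zero => simpa [Nat.le_zero.mp h12] using h1
    | succ n ih =>
      rcases Nat.lt_or_ge κ₁ (n + 1) with h | h
      · exact hstep n h2k (ih (Nat.lt_succ_iff.mp h) (lt_trans (Nat.lt_succ_self n) h2k))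
      · have : κ₁ = n + 1 := le_antisymm h12 h
        simpa [← this] using h1
  -- A (k - 1) holds
  have hAtop : A (k - 1) := by
    have hk1p : k - 1 < p := lt_of_lt_of_le (Nat.sub_lt hk1 one_pos) hkp
    have hcast : ((k : ℝ) - ((k - 1 : ℕ) : ℝ)) = 1 := by
      have : ((k - 1 : ℕ) : ℝ) = (k : ℝ) - 1 := by
        push_cast [Nat.cast_sub hk1]; ring
      rw [this]; ring
    simp only [hA, hcast, one_mul]
    rw [hsplit _ hk1p]
    linarith [hSnonneg (k - 1 + 1)]
  -- minimal κ with A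
  have hex : ∃ κ, κ < k ∧ A κ := ⟨k - 1, Nat.sub_lt hk1 one_pos, hAtop⟩
  set κ₀ := Nat.find hex with hκ₀
  obtain ⟨hκ₀k, hAκ₀⟩ := Nat.find_spec hex
  have hc₀ : (0 : ℝ) < (k : ℝ) - κ₀ := by
    have : (κ₀ : ℝ) < k := by exact_mod_cast hκ₀k
    linarith
  -- translate A κ to the goal form, for κ < k
  have hiff : ∀ κ, κ < k →
      (b κ ≤ (1 / ((k : ℝ) - κ)) * S κ ↔ A κ) := by
    intro κ hκk
    have hc : (0 : ℝ) < (k : ℝ) - κ := by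
      have : (κ : ℝ) < k := by exact_mod_cast hκk
      linarith
    rw [one_div, inv_mul_eq_div, le_div_iff₀ hc, hA, mul_comm]
  -- translate the middle condition to ¬A (κ-1), for 1 ≤ κ < k
  have hiff2 : ∀ κ, 0 < κ → κ < k →
      ((1 / ((k : ℝ) - κ)) * S κ < b (κ - 1) ↔ ¬ A (κ - 1)) := by
    intro κ hκ0 hκk
    have hc : (0 : ℝ) < (k : ℝ) - κ := by
      have : (κ : ℝ) < k := by exact_mod_cast hκk
      linarith
    have hκ1p : κ - 1 < p := lt_of_lt_of_le (lt_of_lt_of_le (Nat.sub_lt hκ0 one_pos) hκk.le) hkp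
    have hcastm : ((κ - 1 : ℕ) : ℝ) = (κ : ℝ) - 1 := by
      push_cast [Nat.cast_sub hκ0]; ring
    have hsucc : κ - 1 + 1 = κ := Nat.succ_pred_eq_of_pos hκ0
    rw [one_div, inv_mul_eq_div, div_lt_iff₀ hc, hA]
    constructor
    · intro h hcon
      rw [hsplit _ hκ1p, hsucc, hcastm] at hcon
      nlinarith [hcon, h]
    · intro h
      by_contra hcon
      push_neg at hcon
      apply h
      rw [hsplit _ hκ1p, hsucc, hcastm]
      nlinarith [hcon]
  refine ⟨κ₀, ⟨hκ₀k, ?_, (hiff κ₀ hκ₀k).mpr hAκ₀⟩, ?_⟩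
  · rcases Nat.eq_zero_or_pos κ₀ with h0 | hpos
    · exact Or.inl h0
    · right
      rw [hiff2 κ₀ hpos hκ₀k]
      intro hAprev
      exact Nat.find_min hex (Nat.sub_lt hpos one_pos)
        ⟨lt_of_le_of_lt (Nat.sub_le κ₀ 1) hκ₀k, hAprev⟩
  · rintro κ' ⟨hκ'k, hmid, hlast⟩
    have hAκ' : A κ' := (hiff κ' hκ'k).mp hlast
    rcases lt_trichotomy κ' κ₀ with h | h | h
    · exact absurd ⟨hκ'k, hAκ'⟩ (Nat.find_min hex h)
    · exact h
    · exfalso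
      have hκ'pos : 0 < κ' := lt_of_le_of_lt (Nat.zero_le κ₀) h
      rcases hmid with h0 | hlt
      · omega
      · have : ¬ A (κ' - 1) := (hiff2 κ' hκ'pos hκ'k).mp hlt
        exact this (hmonoA κ₀ (κ' - 1) (by omega)
          (lt_of_le_of_lt (Nat.sub_le κ' 1) hκ'k) hAκ₀)
end

section
/- Let α* be the minimizer of φ(α) = ½‖α − β‖² + ρ·TopSum_k(H_M(|α₁|),…,H_M(|α_p|)) over ℝ^p with ρ > 0. Then sign(α*ⱼ) · sign(βⱼ) ≥ 0 for every j (the minimizer has the same signs as β, where zero is compatible with any sign). -/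
/-- The Huber loss function with parameter `M`. -/
noncomputable def huber (M α : ℝ) : ℝ :=
  if |α| ≤ M then α ^ 2 / 2 else M * |α| - M ^ 2 / 2

/-- Sum of the `k` largest entries of `w`. -/
noncomputable def topSum {p : ℕ} (k : ℕ) (w : Fin p → ℝ) : ℝ :=
  sSup {v : ℝ | ∃ s : Finset (Fin p), s.card = k ∧ v = ∑ j ∈ s, w j}

/-- The minimizer of `½‖α − β‖² + ρ·TopSum_k(H_M(|α₁|),…,H_M(|α_p|))` has the
same signs as `β` (zero compatible with any sign). -/
theorem topk_prox_sign (p k : ℕ) (hk1 : 1 ≤ k) (hkp : k ≤ p)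
    (M ρ : ℝ) (hM : 0 < M) (hρ : 0 < ρ) (β αstar : Fin p → ℝ)
    (hmin : ∀ α : Fin p → ℝ,
      1 / 2 * ∑ j, (αstar j - β j) ^ 2 + ρ * topSum k (fun j => huber M |αstar j|)
        ≤ 1 / 2 * ∑ j, (α j - β j) ^ 2 + ρ * topSum k (fun j => huber M |α j|)) :
    ∀ j, 0 ≤ Real.sign (αstar j) * Real.sign (β j) := by
  intro j
  by_contra hneg
  push_neg at hneg
  -- From sign product negative, get αstar j * β j < 0
  have hab : αstar j * β j < 0 := by
    rcases lt_trichotomy (αstar j) 0 with ha | ha | ha <;>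
      rcases lt_trichotomy (β j) 0 with hb | hb | hb <;>
      simp [Real.sign_of_neg, Real.sign_of_pos, ha, hb] at hneg ⊢ <;>
      nlinarith
  -- The flipped candidate
  set α' : Fin p → ℝ := Function.update αstar j (-αstar j) with hα'
  have habs : ∀ i, |α' i| = |αstar i| := by
    intro i
    by_cases hij : i = j
    · subst hij; simp [hα']
    · simp [hα', Function.update_of_ne hij]
  have hpen : (fun i => huber M |α' i|) = (fun i => huber M |αstar i|) := by
    funext i; rw [habs]
  have hsum : ∑ i, (α' i - β i) ^ 2 < ∑ i, (αstar i - β i) ^ 2 := by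
    have h1 : ∑ i, (α' i - β i) ^ 2
        = (α' j - β j) ^ 2 + ∑ i ∈ Finset.univ.erase j, (α' i - β i) ^ 2 :=
      (Finset.add_sum_erase _ _ (Finset.mem_univ j)).symm
    have h2 : ∑ i, (αstar i - β i) ^ 2
        = (αstar j - β j) ^ 2 + ∑ i ∈ Finset.univ.erase j, (αstar i - β i) ^ 2 :=
      (Finset.add_sum_erase _ _ (Finset.mem_univ j)).symm
    have h3 : ∑ i ∈ Finset.univ.erase j, (α' i - β i) ^ 2
        = ∑ i ∈ Finset.univ.erase j, (αstar i - β i) ^ 2 := by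
      refine Finset.sum_congr rfl fun i hi => ?_
      have : i ≠ j := (Finset.mem_erase.mp hi).1
      simp [hα', Function.update_of_ne this]
    have h4 : (α' j - β j) ^ 2 < (αstar j - β j) ^ 2 := by
      have : α' j = -αstar j := by simp [hα']
      rw [this]; nlinarith
    rw [h1, h2, h3]; linarith
  have := hmin α'
  rw [hpen] at this
  linarith
end
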